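/- arXiv:1405.4412 — 2 statements merged into one kernel-verified Lean document; each statement's English description precedes it below -/
import Mathlib

section
/- For every integer n > 8 and every ε > 0, the limit as α → 0⁺ of ∫₀^{ε/α} [1 - ((n-4)(n²-4n+8)/(n(n-2)))·σ⁴/(1+σ²)²]·(1+σ²)^{4-n}·σ^{n-1} dσ exists and equals a strictly negative real number (depending only on n). -/
/-!
Write `I(m, p) = ∫₀^∞ σ^m / (1 + σ²)^p dσ`, finite when `m + 2 ≤ 2p`. The integrand is
`σ^(n-1)/(1+σ²)^(n-4) - c σ^(n+3)/(1+σ²)^(n-2)`, integrable on `(0, ∞)` exactly when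
`n > 8`, so the limit is `I(n-1, n-4) - c I(n+3, n-2)`. Integrating the derivative of
`σ^(m+1)/(1+σ²)^p` gives the reduction `2p I(m+2, p+1) = (m+1) I(m, p)`; applied twice it
turns the limit into `(1 - (n+2)(n²-4n+8) / (4(n-2)(n-3))) I(n-1, n-4)`, and the
coefficient is negative.
-/

open Filter MeasureTheory Set Topology

lemma pow_le_one_add_sq_pow {σ : ℝ} (hσ : 0 ≤ σ) {m p : ℕ} (h : m ≤ 2 * p) :
    σ ^ m ≤ (1 + σ ^ 2) ^ p := by
  have hmax : max 1 σ ^ 2 ≤ 1 + σ ^ 2 := by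
    rcases le_total σ 1 with hσ1 | hσ1
    · rw [max_eq_left hσ1]; nlinarith
    · rw [max_eq_right hσ1]; nlinarith
  calc σ ^ m ≤ max 1 σ ^ m := pow_le_pow_left₀ hσ (le_max_right 1 σ) m
    _ ≤ max 1 σ ^ (2 * p) := pow_le_pow_right₀ (le_max_left 1 σ) h
    _ = (max 1 σ ^ 2) ^ p := pow_mul _ _ _
    _ ≤ (1 + σ ^ 2) ^ p := pow_le_pow_left₀ (by positivity) hmax p

lemma continuous_pow_div_one_add_sq_pow (m p : ℕ) :
    Continuous fun σ : ℝ => σ ^ m / (1 + σ ^ 2) ^ p :=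
  (continuous_pow m).div ((continuous_const.add (continuous_pow 2)).pow p)
    fun σ => by positivity

lemma integrableOn_pow_div_one_add_sq_pow {m p : ℕ} (h : m + 2 ≤ 2 * p) :
    IntegrableOn (fun σ : ℝ => σ ^ m / (1 + σ ^ 2) ^ p) (Ioi 0) := by
  obtain ⟨q, rfl⟩ : ∃ q, p = q + 1 := ⟨p - 1, by omega⟩
  refine (integrable_inv_one_add_sq.restrict (s := Ioi 0)).mono
    (continuous_pow_div_one_add_sq_pow m (q + 1)).aestronglyMeasurable ?_
  filter_upwards [ae_restrict_mem measurableSet_Ioi] with σ (hσ : 0 < σ)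
  rw [Real.norm_of_nonneg (by positivity), Real.norm_of_nonneg (by positivity), pow_succ,
    ← div_div, inv_eq_one_div]
  gcongr
  rw [div_le_one (by positivity)]
  exact pow_le_one_add_sq_pow hσ.le (by omega)

lemma tendsto_pow_div_one_add_sq_pow_atTop {m p : ℕ} (h : m + 1 ≤ 2 * p) :
    Tendsto (fun σ : ℝ => σ ^ m / (1 + σ ^ 2) ^ p) atTop (𝓝 0) := by
  refine tendsto_of_tendsto_of_tendsto_of_le_of_le' tendsto_const_nhds tendsto_inv_atTop_zero
    ?_ ?_
  · filter_upwards [eventually_ge_atTop 0] with σ hσ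
    positivity
  · filter_upwards [eventually_gt_atTop 0] with σ hσ
    calc σ ^ m / (1 + σ ^ 2) ^ p ≤ σ ^ m / σ ^ (m + 1) := by
          gcongr; exact pow_le_one_add_sq_pow hσ.le h
      _ = σ⁻¹ := by rw [pow_succ]; field_simp

lemma hasDerivAt_pow_succ_div_one_add_sq_pow (m p : ℕ) (σ : ℝ) :
    HasDerivAt (fun σ : ℝ => σ ^ (m + 1) / (1 + σ ^ 2) ^ p)
      ((m + 1) * (σ ^ m / (1 + σ ^ 2) ^ p) - 2 * p * (σ ^ (m + 2) / (1 + σ ^ 2) ^ (p + 1)))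
      σ := by
  have hden := ((hasDerivAt_pow 2 σ).const_add 1).fun_pow p
  refine ((hasDerivAt_pow (m + 1) σ).fun_div hden (by positivity)).congr_deriv ?_
  rcases p with _ | q
  · simp
  · simp only [Nat.add_sub_cancel]
    push_cast
    field_simp
    ring

theorem two_mul_integral_pow_add_two_div_one_add_sq_pow_succ {m p : ℕ} (h : m + 2 ≤ 2 * p) :
    2 * (p : ℝ) * ∫ σ in Ioi (0 : ℝ), σ ^ (m + 2) / (1 + σ ^ 2) ^ (p + 1) =
      ((m : ℝ) + 1) * ∫ σ in Ioi (0 : ℝ), σ ^ m / (1 + σ ^ 2) ^ p := by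
  have hint := integrableOn_pow_div_one_add_sq_pow h
  have hint' := integrableOn_pow_div_one_add_sq_pow (m := m + 2) (p := p + 1) (by omega)
  have hparts := integral_Ioi_of_hasDerivAt_of_tendsto
    (continuous_pow_div_one_add_sq_pow (m + 1) p).continuousWithinAt
    (fun σ _ => hasDerivAt_pow_succ_div_one_add_sq_pow m p σ)
    ((hint.const_mul _).sub (hint'.const_mul _))
    (tendsto_pow_div_one_add_sq_pow_atTop (by omega))
  rw [integral_sub (hint.const_mul _) (hint'.const_mul _), integral_const_mul,
    integral_const_mul, zero_pow m.succ_ne_zero, zero_div, sub_zero] at hparts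
  linarith

lemma integral_pow_div_one_add_sq_pow_pos {m p : ℕ} (h : m + 2 ≤ 2 * p) :
    0 < ∫ σ in Ioi (0 : ℝ), σ ^ m / (1 + σ ^ 2) ^ p := by
  rw [setIntegral_pos_iff_support_of_nonneg_ae _ (integrableOn_pow_div_one_add_sq_pow h)]
  · calc (0 : ENNReal) < volume (Ioi (0 : ℝ)) := by simp
      _ ≤ _ := measure_mono fun σ (hσ : 0 < σ) =>
        show σ ∈ Function.support _ ∩ Ioi 0 from
          ⟨by rw [Function.mem_support]; positivity, hσ⟩
  · filter_upwards [ae_restrict_mem measurableSet_Ioi] with σ (hσ : 0 < σ)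
    positivity

lemma tendsto_intervalIntegral_div_nhdsGT_zero {f : ℝ → ℝ} {a ε : ℝ}
    (hf : IntegrableOn f (Ioi a)) (hε : 0 < ε) :
    Tendsto (fun α => ∫ σ in a..ε / α, f σ) (𝓝[>] 0) (𝓝 (∫ σ in Ioi a, f σ)) :=
  intervalIntegral_tendsto_integral_Ioi a hf <|
    (tendsto_inv_nhdsGT_zero.const_mul_atTop hε).congr fun α => (div_eq_mul_inv ε α).symm

theorem integral_pow_add_three_div_one_add_sq_pow_sub_two {n : ℕ} (hn : 8 < n) :
    ∫ σ in Ioi (0 : ℝ), σ ^ (n + 3) / (1 + σ ^ 2) ^ (n - 2) =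
      (n : ℝ) * (n + 2) / (4 * (n - 4) * (n - 3)) *
        ∫ σ in Ioi (0 : ℝ), σ ^ (n - 1) / (1 + σ ^ 2) ^ (n - 4) := by
  obtain ⟨p, rfl⟩ : ∃ p, n = p + 4 := ⟨n - 4, by omega⟩
  have h₁ := two_mul_integral_pow_add_two_div_one_add_sq_pow_succ (m := p + 3) (p := p) (by omega)
  have h₂ := two_mul_integral_pow_add_two_div_one_add_sq_pow_succ (m := p + 5) (p := p + 1)
    (by omega)
  have hp : (5 : ℝ) ≤ p := by exact_mod_cast (by omega : 5 ≤ p)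
  rw [show p + 4 + 3 = p + 5 + 2 by omega, show p + 4 - 2 = p + 1 + 1 by omega,
    show p + 4 - 1 = p + 3 by omega, show p + 4 - 4 = p by omega]
  rw [show p + 3 + 2 = p + 5 by omega] at h₁
  push_cast at h₁ h₂ ⊢
  have : (p : ℝ) + 4 - 4 ≠ 0 := by linarith
  have : (p : ℝ) + 4 - 3 ≠ 0 := by linarith
  field_simp
  linear_combination (2 * (p : ℝ)) * h₂ + ((p : ℝ) + 6) * h₁

lemma integrand_eq_pow_div_sub_mul_pow_div {n : ℕ} (hn : 4 ≤ n) (c σ : ℝ) :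
    (1 - c * σ ^ 4 / (1 + σ ^ 2) ^ 2) * (1 + σ ^ 2) ^ ((4 : ℤ) - n) * σ ^ (n - 1) =
      σ ^ (n - 1) / (1 + σ ^ 2) ^ (n - 4) - c * (σ ^ (n + 3) / (1 + σ ^ 2) ^ (n - 2)) := by
  obtain ⟨p, rfl⟩ : ∃ p, n = p + 4 := ⟨n - 4, by omega⟩
  rw [show (4 : ℤ) - ((p + 4 : ℕ) : ℤ) = -(p : ℤ) by push_cast; ring, zpow_neg,
    zpow_natCast, show p + 4 - 1 = p + 3 by omega, show p + 4 - 4 = p by omega,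
    show p + 4 - 2 = p + 2 by omega]
  field_simp
  ring

theorem neg_limit_of_integral (n : ℕ) (hn : 8 < n) :
    ∃ L : ℝ, L < 0 ∧ ∀ ε : ℝ, 0 < ε →
      Tendsto (fun α : ℝ => ∫ σ in (0:ℝ)..(ε / α),
          (1 - (((n : ℝ) - 4) * ((n : ℝ) ^ 2 - 4 * n + 8) / ((n : ℝ) * ((n : ℝ) - 2)))
              * σ ^ 4 / (1 + σ ^ 2) ^ 2)
            * (1 + σ ^ 2) ^ ((4 : ℤ) - n) * σ ^ (n - 1))
        (nhdsWithin 0 (Set.Ioi 0)) (nhds L) := by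
  set c : ℝ := ((n : ℝ) - 4) * ((n : ℝ) ^ 2 - 4 * n + 8) / ((n : ℝ) * ((n : ℝ) - 2))
  have hint₀ := integrableOn_pow_div_one_add_sq_pow (m := n - 1) (p := n - 4) (by omega)
  have hint₂ := integrableOn_pow_div_one_add_sq_pow (m := n + 3) (p := n - 2) (by omega)
  have hint : IntegrableOn (fun σ : ℝ => σ ^ (n - 1) / (1 + σ ^ 2) ^ (n - 4)
      - c * (σ ^ (n + 3) / (1 + σ ^ 2) ^ (n - 2))) (Ioi 0) :=
    hint₀.sub (hint₂.const_mul c)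
  refine ⟨_, ?_, fun ε hε => (tendsto_intervalIntegral_div_nhdsGT_zero hint hε).congr
    fun α => intervalIntegral.integral_congr fun σ _ =>
      (integrand_eq_pow_div_sub_mul_pow_div (by omega) c σ).symm⟩
  have hn' : (9 : ℝ) ≤ n := by exact_mod_cast hn
  have hcoef : 1 < c * (n * (n + 2) / (4 * (n - 4) * (n - 3))) := by
    have key : 4 * ((n : ℝ) - 2) * (n - 3) < (n ^ 2 - 4 * n + 8) * (n + 2) := by nlinarith
    have hpos : (0 : ℝ) < n * (n - 4) := mul_pos (by linarith) (by linarith)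
    rw [div_mul_div_comm, one_lt_div (by nlinarith)]
    nlinarith [mul_lt_mul_of_pos_left key hpos]
  rw [integral_sub hint₀ (hint₂.const_mul c), integral_const_mul,
    integral_pow_add_three_div_one_add_sq_pow_sub_two hn]
  nlinarith [integral_pow_div_one_add_sq_pow_pos (m := n - 1) (p := n - 4) (by omega)]
end

section
/- Let F: [0,∞) → [0,∞) be a C¹ function satisfying (i) F'(t) ≤ C·F(t)·(1 + F(t)^{1/2}) for all t ≥ 0, and (ii) ∫₀^∞ F(t) dt < ∞. Then lim_{t→∞} F(t) = 0. -/
open MeasureTheory Filter Set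

/-!
Below level `1` the differential inequality caps `F'` by `2 C`, so `F` needs time at least
`ε / (4 C)` to climb from `ε / 2` to `ε ≤ 1`. Hence `F t ≥ ε` forces `F ≥ ε / 2` on
`[t - ε / (4 C), t]`, an integral of at least `ε² / (8 C)` over a window of fixed length;
integrability makes such window integrals tend to `0`.
-/

theorem sub_le_mul_sub_of_hasDerivAt_le_below {f f' : ℝ → ℝ} {a b K L : ℝ} (hab : a ≤ b)
    (hf : ∀ x ∈ Icc a b, HasDerivAt f (f' x) x) (hf' : ∀ x ∈ Icc a b, f x < L → f' x ≤ K)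
    (ha : f a < L) (hb : L ≤ f b) : L - f a ≤ K * (b - a) := by
  have hcont : ContinuousOn f (Icc a b) := fun x hx => (hf x hx).continuousAt.continuousWithinAt
  set S := Icc a b ∩ f ⁻¹' Ici L
  have hS : IsCompact S :=
    isCompact_Icc.of_isClosed_subset
      (hcont.preimage_isClosed_of_isClosed isClosed_Icc isClosed_Ici) inter_subset_left
  have hc : sInf S ∈ S := hS.sInf_mem ⟨b, ⟨hab, le_rfl⟩, hb⟩
  -- `c` is the first time `f` reaches `L` in `[a, b]`.
  set c := sInf S
  have hcb : c ≤ b := hc.1.2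
  have below : ∀ x ∈ Ico a c, f x < L := fun x hx =>
    not_le.1 fun hLx => (csInf_le hS.bddBelow ⟨⟨hx.1, hx.2.le.trans hcb⟩, hLx⟩).not_gt hx.2
  have climb : f c ≤ f a + K * (c - a) :=
    image_le_of_deriv_right_le_deriv_boundary (B := fun x => f a + K * (x - a)) (B' := fun _ => K)
      (hcont.mono (Icc_subset_Icc_right hcb))
      (fun x hx => (hf x ⟨hx.1, hx.2.le.trans hcb⟩).hasDerivWithinAt) (by simp) (by fun_prop)
      (fun x _ => ((hasDerivAt_id x).sub_const a |>.const_mul K |>.const_add (f a)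
        |>.hasDerivWithinAt).congr_deriv (by simp))
      (fun x hx => hf' x ⟨hx.1, hx.2.le.trans hcb⟩ (below x hx)) ⟨hc.1.1, le_rfl⟩
  have hLc : L ≤ f c := hc.2
  rcases le_or_gt 0 K with hK | hK <;> nlinarith [hc.1.1]

theorem mul_one_add_sqrt_le_two {x : ℝ} (h0 : 0 ≤ x) (h1 : x ≤ 1) : x * (1 + √x) ≤ 2 := by
  have : √x ≤ 1 := Real.sqrt_le_one.mpr h1
  nlinarith [Real.sqrt_nonneg x]

theorem tendsto_intervalIntegral_sub_atTop {f : ℝ → ℝ} {a : ℝ} (hf : IntegrableOn f (Ioi a))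
    (δ : ℝ) : Tendsto (fun t => ∫ x in (t - δ)..t, f x) atTop (nhds 0) := by
  have hint : ∀ s, a ≤ s → IntervalIntegrable f volume a s := fun s hs =>
    (intervalIntegrable_iff_integrableOn_Ioc_of_le hs).2 (hf.mono_set Ioc_subset_Ioi_self)
  have hdiff := (intervalIntegral_tendsto_integral_Ioi a hf tendsto_id).sub
    (intervalIntegral_tendsto_integral_Ioi a hf (tendsto_atTop_add_const_right _ (-δ) tendsto_id))
  rw [sub_self] at hdiff
  refine hdiff.congr' ?_
  filter_upwards [eventually_ge_atTop (a + δ), eventually_ge_atTop a] with t htδ ht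
  exact intervalIntegral.integral_interval_sub_left (hint t ht) (hint (t - δ) (by linarith))

section
variable {C : ℝ} {F F' : ℝ → ℝ} (hF0 : ∀ t, 0 ≤ t → 0 ≤ F t)
  (hderiv : ∀ t, 0 ≤ t → HasDerivAt F (F' t) t)
  (hineq : ∀ t, 0 ≤ t → F' t ≤ C * F t * (1 + Real.sqrt (F t)))
include hF0 hderiv hineq

theorem half_le_of_le_of_sub_le {ε a t : ℝ} (hC : 0 ≤ C) (hε1 : ε ≤ 1) (ha : 0 ≤ a) (hat : a ≤ t)
    (hFt : ε ≤ F t) (hta : 4 * C * (t - a) ≤ ε) : ε / 2 ≤ F a := by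
  by_contra! hFa
  have hslow : ∀ x ∈ Icc a t, F x < ε → F' x ≤ 2 * C := fun x hx hFx => by
    have hx0 : 0 ≤ x := ha.trans hx.1
    calc F' x ≤ C * (F x * (1 + √(F x))) := by rw [← mul_assoc]; exact hineq x hx0
      _ ≤ C * 2 := by gcongr; exact mul_one_add_sqrt_le_two (hF0 x hx0) (by linarith)
      _ = 2 * C := mul_comm _ _
  have hclimb := sub_le_mul_sub_of_hasDerivAt_le_below hat (fun x hx => hderiv x (ha.trans hx.1))
    hslow (by linarith [hF0 a ha]) hFt
  linarith

theorem mul_le_intervalIntegral_of_le {ε δ t : ℝ} (hC : 0 ≤ C) (hε1 : ε ≤ 1) (hδ : 0 ≤ δ)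
    (htδ : δ ≤ t) (hδε : 4 * C * δ ≤ ε) (hFt : ε ≤ F t) : ε / 2 * δ ≤ ∫ x in (t - δ)..t, F x := by
  have hle : t - δ ≤ t := by linarith
  have hcont : ContinuousOn F (uIcc (t - δ) t) := fun x hx =>
    (hderiv x (by rw [uIcc_of_le hle] at hx; linarith [hx.1])).continuousAt.continuousWithinAt
  calc ε / 2 * δ = ∫ x in (t - δ)..t, ε / 2 := by
        rw [intervalIntegral.integral_const, sub_sub_cancel, smul_eq_mul, mul_comm]
    _ ≤ ∫ x in (t - δ)..t, F x := by
      refine intervalIntegral.integral_mono_on hle intervalIntegrable_const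
        hcont.intervalIntegrable fun x hx => ?_
      refine half_le_of_le_of_sub_le hF0 hderiv hineq hC hε1 (by linarith [hx.1]) hx.2 hFt ?_
      nlinarith [hx.1]

end

theorem F2_tendsto_zero_general (C : ℝ) (hC : 0 < C) (F F' : ℝ → ℝ)
    (hF0 : ∀ t, 0 ≤ t → 0 ≤ F t)
    (hderiv : ∀ t, 0 ≤ t → HasDerivAt F (F' t) t)
    (hineq : ∀ t, 0 ≤ t → F' t ≤ C * F t * (1 + Real.sqrt (F t)))
    (hint : IntegrableOn F (Set.Ici 0)) :
    Tendsto F atTop (nhds 0) := by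
  refine tendsto_order.2 ⟨fun a ha => eventually_atTop.2 ⟨0, fun t ht => ha.trans_le (hF0 t ht)⟩,
    fun ε hε => ?_⟩
  set η := min ε 1
  have hη : 0 < η := lt_min hε one_pos
  set δ := η / (4 * C)
  have hδ : 0 < δ := by positivity
  have hsmall := (tendsto_intervalIntegral_sub_atTop (hint.mono_set Ioi_subset_Ici_self) δ)
    |>.eventually (gt_mem_nhds (show 0 < η / 2 * δ by positivity))
  filter_upwards [hsmall, eventually_ge_atTop δ] with t hwindow ht
  by_contra! hFt
  have hlarge := mul_le_intervalIntegral_of_le hF0 hderiv hineq hC.le (min_le_right ε 1) hδ.le ht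
    (by rw [mul_div_cancel₀ _ (by positivity)]) ((min_le_left ε 1).trans hFt)
  linarith

theorem F2_tendsto_zero (C : ℝ) (hC : 0 < C) (F F' : ℝ → ℝ)
    (hF0 : ∀ t, 0 ≤ t → 0 ≤ F t)
    (hderiv : ∀ t, 0 ≤ t → HasDerivAt F (F' t) t)
    (hcont : ContinuousOn F' (Set.Ici 0))
    (hineq : ∀ t, 0 ≤ t → F' t ≤ C * F t * (1 + Real.sqrt (F t)))
    (hint : IntegrableOn F (Set.Ici 0)) :
    Tendsto F atTop (nhds 0) :=
  F2_tendsto_zero_general C hC F F' hF0 hderiv hineq hint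
end
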